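/- arXiv:1605.00281 — 2 statements merged into one kernel-verified Lean document; each statement's English description precedes it below -/
import Mathlib

section
/- Let γ > −1 be real and let m, n be nonnegative integers. Then for every z in the open unit disk with z ≠ 0, Z_{m,n}^γ(z, z̄) = ((γ+1)_{m+n})² / ((γ+1)_m (γ+1)_n) · z̄^m z^n · Σ_{j=0}^{min(m,n)} (−m)_j (−n)_j / ((−γ−m−n)_j · j!) · |z|^{−2j}, where the Pochhammer symbols (−γ−m−n)_j are nonzero for 0 ≤ j ≤ min(m,n) since γ > −1. -/
open MeasureTheory Finset

/-- Pochhammer symbol `(a)_k = a (a+1) ⋯ (a+k-1)`. -/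
noncomputable def poch (a : ℝ) (k : ℕ) : ℝ := (ascPochhammer ℝ k).eval a

/-- Generalized Zernike polynomial `Z_{m,n}^γ(z, z̄)`. -/
noncomputable def Zern (γ : ℝ) (m n : ℕ) (z : ℂ) : ℂ :=
  (Nat.factorial m : ℂ) * (Nat.factorial n : ℂ) * ((poch (γ + 1) (m + n) : ℝ) : ℂ) *
    ∑ j ∈ Finset.range (min m n + 1),
      ((-1 : ℂ) ^ j * (((1 - ‖z‖ ^ 2) ^ j : ℝ) : ℂ) *
        (starRingEnd ℂ z) ^ (m - j) * z ^ (n - j)) /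
      ((poch (γ + 1) j * Nat.factorial j * Nat.factorial (m - j) * Nat.factorial (n - j) : ℝ) : ℂ)

/-!
With `u = |z|⁻²`, each term `(-1)^j (1 - |z|²)^j z̄^(m-j) z^(n-j)` equals `z̄^m z^n (1 - u)^j`,
so `Z_{m,n}^γ = (γ+1)_{m+n} z̄^m z^n ₂F₁(-m, -n; γ+1; 1-u)`. The claim is then the terminating
transformation `₂F₁(-m, -n; a; 1-u) = (a)_{m+n} / ((a)_m (a)_n) · ₂F₁(-m, -n; 1-a-m-n; u)`.
Expanding `(1-u)^j` binomially, the coefficient of `u^k` on the left becomes, after the shift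
`j = k + i`, a Chu–Vandermonde sum, and the reflection `(1-a-s)_k (a)_(s-k) = (-1)^k (a)_s` turns
it into the coefficient on the right.
-/

open Nat Polynomial ComplexConjugate

lemma poch_pos {a : ℝ} (ha : 0 < a) (k : ℕ) : 0 < poch a k := ascPochhammer_pos k a ha

lemma poch_add (a : ℝ) (i j : ℕ) : poch a (i + j) = poch a i * poch (a + i) j := by
  simpa [poch, eval_comp] using (congrArg (eval a) (ascPochhammer_mul ℝ i j)).symm

lemma poch_eq_mul_of_le {a : ℝ} {i s : ℕ} (h : i ≤ s) :
    poch a s = poch a i * poch (a + i) (s - i) := by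
  rw [← poch_add, Nat.add_sub_cancel' h]

lemma poch_ne_zero_of_le {a : ℝ} {i s : ℕ} (h : i ≤ s) (hs : poch a s ≠ 0) :
    poch a i ≠ 0 :=
  left_ne_zero_of_mul (poch_eq_mul_of_le h ▸ hs)

lemma poch_neg_natCast (m j : ℕ) : poch (-m) j = (-1) ^ j * m.descFactorial j := by
  rw [poch, ascPochhammer_eval_neg_eq_descPochhammer, descPochhammer_eval_eq_descFactorial]

lemma poch_neg_natCast_mul_poch_neg_natCast (m n j : ℕ) :
    poch (-m) j * poch (-n) j = m.descFactorial j * n.descFactorial j := by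
  rw [poch_neg_natCast, poch_neg_natCast, mul_mul_mul_comm, ← mul_pow]
  norm_num

lemma poch_one_sub_sub_mul_poch (a : ℝ) {k s : ℕ} (h : k ≤ s) :
    poch (1 - a - s) k * poch a (s - k) = (-1) ^ k * poch a s := by
  have : 1 - a - s = -(a + s - 1) := by ring
  rw [poch_eq_mul_of_le (Nat.sub_le s k), Nat.sub_sub_self h, poch, this,
    ascPochhammer_eval_neg_eq_descPochhammer, descPochhammer_eval_eq_ascPochhammer, Nat.cast_sub h]
  unfold poch
  ring_nf

lemma descPochhammer_smeval_eq_poch (r : ℝ) (k : ℕ) :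
    (descPochhammer ℤ k).smeval r = poch (r - k + 1) k := by
  rw [descPochhammer_smeval_eq_ascPochhammer, ascPochhammer_smeval_eq_eval, poch]

/-- Chu–Vandermonde: `Ring.descPochhammer_smeval_add` at `r = N`, `s = b + M - 1`. -/
lemma poch_add_natCast_eq_sum (b : ℝ) (M N : ℕ) :
    poch (b + N) M =
      ∑ i ∈ range (M + 1), M.choose i * N.descFactorial i * poch (b + i) (M - i) := by
  have h := Ring.descPochhammer_smeval_add (r := (N : ℝ)) (s := b + M - 1) M (Commute.all _ _)
  rw [Nat.sum_antidiagonal_eq_sum_range_succ_mk] at h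
  rw [descPochhammer_smeval_eq_poch, show (N : ℝ) + (b + M - 1) - M + 1 = b + N by ring] at h
  rw [h]
  refine sum_congr rfl fun i hi => ?_
  have hi : i ≤ M := Nat.lt_succ_iff.mp (mem_range.mp hi)
  rw [descPochhammer_smeval_eq_descFactorial, descPochhammer_smeval_eq_poch, Nat.cast_sub hi,
    show b + M - 1 - (M - i : ℝ) + 1 = b + i by ring, mul_assoc]

lemma sum_choose_mul_descFactorial_div_poch {b : ℝ} {M : ℕ} (hb : poch b M ≠ 0) (N : ℕ) :
    ∑ i ∈ range (min M N + 1), M.choose i * N.descFactorial i / poch b i =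
      poch (b + N) M / poch b M := by
  rw [eq_div_iff hb, sum_mul, poch_add_natCast_eq_sum]
  refine sum_subset (range_subset_range.mpr (by omega)) (fun i hiM hiN => ?_) |>.trans
    (sum_congr rfl fun i hi => ?_)
  · have : N < i := by simp only [mem_range] at hiM hiN; omega
    simp [Nat.descFactorial_eq_zero_iff_lt.mpr this]
  · have hi : i ≤ M := by have := mem_range.mp hi; omega
    rw [poch_eq_mul_of_le hi, div_mul_eq_mul_div, mul_div_assoc, mul_div_cancel_left₀ _
      (poch_ne_zero_of_le hi hb)]

/-- Up to the sign `(-1)^k`, the coefficient of `u^k` in `hyp2F1 m n a (1 - u)`. -/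
lemma sum_choose_mul_descFactorial_div_poch_factorial {a : ℝ} {m n k : ℕ} (ha : poch a m ≠ 0)
    (hkm : k ≤ m) (hkn : k ≤ n) :
    ∑ j ∈ range (min m n + 1),
        j.choose k * (m.descFactorial j * n.descFactorial j / (poch a j * j !)) =
      m.descFactorial k * n.descFactorial k / k ! * (poch (a + n) (m - k) / poch a m) := by
  have hak : poch a k ≠ 0 := poch_ne_zero_of_le hkm ha
  have hakm : poch (a + k) (m - k) ≠ 0 :=
    right_ne_zero_of_mul (poch_eq_mul_of_le (a := a) hkm ▸ ha)
  have hterm : ∀ i ∈ range (min (m - k) (n - k) + 1),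
      ((k + i).choose k : ℝ) * (m.descFactorial (k + i) * n.descFactorial (k + i) /
          (poch a (k + i) * (k + i)!)) =
        m.descFactorial k * n.descFactorial k / (k ! * poch a k) *
          ((m - k).choose i * (n - k).descFactorial i / poch (a + k) i) := by
    intro i hi
    have hik : i ≤ m - k := by have := mem_range.mp hi; omega
    have hai : poch (a + k) i ≠ 0 := poch_ne_zero_of_le hik hakm
    have hchoose : ((k + i).choose k * i ! * k ! : ℝ) = (k + i)! := by
      exact_mod_cast add_comm i k ▸ Nat.add_choose_mul_factorial_mul_factorial i k
    have hchoose0 : ((k + i).choose k : ℝ) ≠ 0 := by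
      exact_mod_cast (Nat.choose_pos (Nat.le_add_right k i)).ne'
    have hdesc (l : ℕ) :
        (l.descFactorial (k + i) : ℝ) = l.descFactorial k * (l - k).descFactorial i := by
      have := Nat.descFactorial_mul_descFactorial (n := l) (Nat.le_add_right k i)
      rw [Nat.add_sub_cancel_left] at this
      rw [← this]
      push_cast
      ring
    rw [poch_add, ← hchoose, hdesc, hdesc, Nat.descFactorial_eq_factorial_mul_choose (m - k)]
    push_cast
    field_simp
  rw [show min m n + 1 = k + (min (m - k) (n - k) + 1) by omega, sum_range_add,
    sum_eq_zero fun j hj => by simp [Nat.choose_eq_zero_of_lt (mem_range.mp hj)], zero_add,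
    sum_congr rfl hterm, ← mul_sum, sum_choose_mul_descFactorial_div_poch hakm,
    show a + k + (n - k : ℕ) = a + n by push_cast [hkn]; ring, poch_eq_mul_of_le (a := a) hkm]
  field_simp

lemma poch_div_mul_div_poch_one_sub_sub {a : ℝ} {m n k : ℕ} (ha : poch a (m + n) ≠ 0)
    (hkm : k ≤ m) :
    poch a (m + n) / (poch a m * poch a n) / poch (1 - a - m - n) k =
      (-1) ^ k * (poch (a + n) (m - k) / poch a m) := by
  have ham : poch a m ≠ 0 := poch_ne_zero_of_le (Nat.le_add_right m n) ha
  have han : poch a n ≠ 0 := poch_ne_zero_of_le (Nat.le_add_left n m) ha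
  have hrefl := poch_one_sub_sub_mul_poch a (Nat.le_add_right_of_le hkm : k ≤ m + n)
  rw [show m + n - k = n + (m - k) by omega, poch_add, Nat.cast_add, ← sub_sub] at hrefl
  have hc : poch (1 - a - m - n) k ≠ 0 := by
    intro h
    rw [h, zero_mul, eq_comm] at hrefl
    exact ha (by simpa using hrefl)
  have hsq : ((-1 : ℝ) ^ k) ^ 2 = 1 := by
    rw [← pow_mul, mul_comm, pow_mul, neg_one_sq, one_pow]
  field_simp
  linear_combination (-(-1) ^ k : ℝ) * hrefl - poch a (m + n) * hsq

/-- `₂F₁(-m, -n; c; x)`; the series terminates since `(-m)_j = 0` for `j > m`. -/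
noncomputable def hyp2F1 (m n : ℕ) (c x : ℝ) : ℝ :=
  ∑ j ∈ range (min m n + 1), poch (-m) j * poch (-n) j / (poch c j * j !) * x ^ j

theorem hyp2F1_one_sub {a : ℝ} {m n : ℕ} (ha : poch a (m + n) ≠ 0) (u : ℝ) :
    hyp2F1 m n a (1 - u) =
      poch a (m + n) / (poch a m * poch a n) * hyp2F1 m n (1 - a - m - n) u := by
  set p := min m n
  have ham : poch a m ≠ 0 := poch_ne_zero_of_le (Nat.le_add_right m n) ha
  have hbinom : ∀ j ∈ range (p + 1),
      (1 - u) ^ j = ∑ k ∈ range (p + 1), j.choose k * (-u) ^ k := by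
    intro j hj
    rw [sub_eq_neg_add, add_pow, ← sum_subset (range_subset_range.mpr (mem_range.mp hj))]
    · simp only [one_pow, mul_one, mul_comm]
    · intro k _ hk
      simp [Nat.choose_eq_zero_of_lt (by simpa using hk : j < k)]
  calc hyp2F1 m n a (1 - u)
      = ∑ j ∈ range (p + 1), ∑ k ∈ range (p + 1),
          j.choose k * (m.descFactorial j * n.descFactorial j / (poch a j * j !)) * (-u) ^ k := by
        simp only [hyp2F1, poch_neg_natCast_mul_poch_neg_natCast]
        refine sum_congr rfl fun j hj => ?_
        rw [hbinom j hj, mul_sum]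
        exact sum_congr rfl fun k _ => by ring
    _ = ∑ k ∈ range (p + 1), (-u) ^ k * (m.descFactorial k * n.descFactorial k / k ! *
          (poch (a + n) (m - k) / poch a m)) := by
        rw [sum_comm]
        refine sum_congr rfl fun k hk => ?_
        have hk := mem_range.mp hk
        rw [← sum_choose_mul_descFactorial_div_poch_factorial ham (by omega) (by omega), mul_sum]
        exact sum_congr rfl fun j _ => by ring
    _ = _ := by
        simp only [hyp2F1, poch_neg_natCast_mul_poch_neg_natCast, mul_sum]
        refine sum_congr rfl fun k hk => ?_
        have hkm : k ≤ m := by have := mem_range.mp hk; omega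
        rw [neg_pow]
        linear_combination (-(u ^ k * (m.descFactorial k * n.descFactorial k / k !))) *
          poch_div_mul_div_poch_one_sub_sub ha hkm

lemma factorial_div_factorial_sub {m j : ℕ} (h : j ≤ m) :
    (m ! : ℝ) / (m - j)! = m.descFactorial j := by
  rw [div_eq_iff (by positivity), mul_comm]
  exact_mod_cast (factorial_mul_descFactorial h).symm

lemma neg_one_pow_mul_one_sub_sq_norm_pow {z : ℂ} (hz : z ≠ 0) {j m n : ℕ} (hm : j ≤ m)
    (hn : j ≤ n) :
    (-1) ^ j * (1 - ‖z‖ ^ 2 : ℂ) ^ j * conj z ^ (m - j) * z ^ (n - j) =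
      conj z ^ m * z ^ n * (1 - (‖z‖ ^ 2 : ℂ)⁻¹) ^ j := by
  set r : ℂ := ‖z‖ ^ 2
  have hr : r = conj z * z := (Complex.conj_mul' z).symm
  have hr0 : r ≠ 0 := by simpa [r] using hz
  have hfactor : -1 * (1 - r) = r * (1 - r⁻¹) := by field_simp; ring
  rw [← mul_pow, hfactor, mul_pow, hr, mul_pow, ← pow_sub_mul_pow (conj z) hm,
    ← pow_sub_mul_pow z hn]
  ring

lemma Zern_eq_hyp2F1 (γ : ℝ) (m n : ℕ) {z : ℂ} (hz : z ≠ 0) :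
    Zern γ m n z = poch (γ + 1) (m + n) * conj z ^ m * z ^ n *
      hyp2F1 m n (γ + 1) (1 - (‖z‖ ^ 2)⁻¹) := by
  rw [Zern, hyp2F1, Complex.ofReal_sum, mul_sum, mul_sum]
  refine sum_congr rfl fun j hj => ?_
  have hm : j ≤ m := by have := mem_range.mp hj; omega
  have hn : j ≤ n := by have := mem_range.mp hj; omega
  have hcoeff : (m ! * n ! / (poch (γ + 1) j * j ! * (m - j)! * (n - j)!) : ℝ) =
      poch (-m) j * poch (-n) j / (poch (γ + 1) j * j !) := by
    rw [poch_neg_natCast_mul_poch_neg_natCast, ← factorial_div_factorial_sub hm,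
      ← factorial_div_factorial_sub hn]
    ring
  replace hcoeff := congrArg Complex.ofReal hcoeff
  push_cast at hcoeff ⊢
  rw [neg_one_pow_mul_one_sub_sq_norm_pow hz hm hn]
  linear_combination
    (poch (γ + 1) (m + n) * conj z ^ m * z ^ n * (1 - (‖z‖ ^ 2 : ℂ)⁻¹) ^ j) * hcoeff

theorem zernike_gauss_hypergeometric'_general (γ : ℝ) (hγ : -1 < γ) (m n : ℕ) (z : ℂ)
    (hz0 : z ≠ 0) :
    Zern γ m n z =
      ((poch (γ + 1) (m + n) ^ 2 / (poch (γ + 1) m * poch (γ + 1) n) : ℝ) : ℂ) *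
        (starRingEnd ℂ z) ^ m * z ^ n *
        ∑ j ∈ Finset.range (min m n + 1),
          ((poch (-(m : ℝ)) j * poch (-(n : ℝ)) j /
              (poch (-γ - m - n) j * Nat.factorial j) *
            ((‖z‖ ^ 2)⁻¹) ^ j : ℝ) : ℂ) := by
  have ha : poch (γ + 1) (m + n) ≠ 0 := (poch_pos (by linarith) _).ne'
  rw [Zern_eq_hyp2F1 γ m n hz0, hyp2F1_one_sub ha,
    show 1 - (γ + 1) - m - n = -γ - m - n by ring, hyp2F1, ← Complex.ofReal_sum]
  push_cast
  ring

theorem zernike_gauss_hypergeometric' (γ : ℝ) (hγ : -1 < γ) (m n : ℕ) (z : ℂ)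
    (hz : z ∈ Metric.ball (0 : ℂ) 1) (hz0 : z ≠ 0) :
    Zern γ m n z =
      ((poch (γ + 1) (m + n) ^ 2 / (poch (γ + 1) m * poch (γ + 1) n) : ℝ) : ℂ) *
        (starRingEnd ℂ z) ^ m * z ^ n *
        ∑ j ∈ Finset.range (min m n + 1),
          ((poch (-(m : ℝ)) j * poch (-(n : ℝ)) j /
              (poch (-γ - m - n) j * Nat.factorial j) *
            ((‖z‖ ^ 2)⁻¹) ^ j : ℝ) : ℂ) :=
  zernike_gauss_hypergeometric'_general γ hγ m n z hz0
end

section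
/- Let ν be real and let f be a smooth complex-valued function on the open unit disk D. Then on D one has the intertwining relation 𝔏_ν(∇_{ν−1} f) = ∇_{ν−1}(𝔏_{ν−1} f + (2ν−1) f). -/
open MeasureTheory

/-- Wirtinger derivative `∂f/∂z = ½(∂f/∂x − i ∂f/∂y)`. -/
noncomputable def wirtZ (f : ℂ → ℂ) (z : ℂ) : ℂ :=
  (1 / 2 : ℂ) * (fderiv ℝ f z 1 - Complex.I * fderiv ℝ f z Complex.I)

/-- Wirtinger derivative `∂f/∂z̄ = ½(∂f/∂x + i ∂f/∂y)`. -/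
noncomputable def wirtZbar (f : ℂ → ℂ) (z : ℂ) : ℂ :=
  (1 / 2 : ℂ) * (fderiv ℝ f z 1 + Complex.I * fderiv ℝ f z Complex.I)

/-- The first order operator `∇_α f = −(1−|z|²) ∂f/∂z + α z̄ f`. -/
noncomputable def nablaOp (α : ℝ) (f : ℂ → ℂ) (z : ℂ) : ℂ :=
  -(((1 - ‖z‖ ^ 2 : ℝ)) : ℂ) * wirtZ f z + (α : ℂ) * (starRingEnd ℂ z) * f z

/-- The formal adjoint `∇_α^* f = (1−|z|²) ∂f/∂z̄ + (α+1) z f`. -/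
noncomputable def nablaStar (α : ℝ) (f : ℂ → ℂ) (z : ℂ) : ℂ :=
  (((1 - ‖z‖ ^ 2 : ℝ)) : ℂ) * wirtZbar f z + ((α : ℂ) + 1) * z * f z

/-- The magnetic Laplacian `L_ν`. -/
noncomputable def magL (ν : ℝ) (f : ℂ → ℂ) (z : ℂ) : ℂ :=
  -(((1 - ‖z‖ ^ 2 : ℝ)) : ℂ) ^ 2 * wirtZ (wirtZbar f) z
    - (ν : ℂ) * (((1 - ‖z‖ ^ 2 : ℝ)) : ℂ) *
        (z * wirtZ f z - (starRingEnd ℂ z) * wirtZbar f z)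
    + (ν : ℂ) ^ 2 * ((‖z‖ ^ 2 : ℝ) : ℂ) * f z




section rules
variable {f g : ℂ → ℂ} {z c : ℂ}

theorem wirtZ_congr (h : f =ᶠ[nhds z] g) : wirtZ f z = wirtZ g z := by
  unfold wirtZ; rw [h.fderiv_eq]

theorem wirtZ_add (hf : DifferentiableAt ℝ f z) (hg : DifferentiableAt ℝ g z) :
    wirtZ (fun w => f w + g w) z = wirtZ f z + wirtZ g z := by
  unfold wirtZ
  rw [fderiv_fun_add hf hg]
  simp only [ContinuousLinearMap.add_apply]; ring

theorem wirtZbar_add (hf : DifferentiableAt ℝ f z) (hg : DifferentiableAt ℝ g z) :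
    wirtZbar (fun w => f w + g w) z = wirtZbar f z + wirtZbar g z := by
  unfold wirtZbar
  rw [fderiv_fun_add hf hg]
  simp only [ContinuousLinearMap.add_apply]; ring

theorem wirtZ_sub (hf : DifferentiableAt ℝ f z) (hg : DifferentiableAt ℝ g z) :
    wirtZ (fun w => f w - g w) z = wirtZ f z - wirtZ g z := by
  unfold wirtZ
  rw [fderiv_fun_sub hf hg]
  simp only [ContinuousLinearMap.sub_apply]; ring

theorem wirtZbar_sub (hf : DifferentiableAt ℝ f z) (hg : DifferentiableAt ℝ g z) :
    wirtZbar (fun w => f w - g w) z = wirtZbar f z - wirtZbar g z := by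
  unfold wirtZbar
  rw [fderiv_fun_sub hf hg]
  simp only [ContinuousLinearMap.sub_apply]; ring

theorem wirtZ_neg :
    wirtZ (fun w => -(f w)) z = -wirtZ f z := by
  unfold wirtZ
  rw [fderiv_fun_neg]
  simp only [ContinuousLinearMap.neg_apply]; ring

theorem wirtZbar_neg :
    wirtZbar (fun w => -(f w)) z = -wirtZbar f z := by
  unfold wirtZbar
  rw [fderiv_fun_neg]
  simp only [ContinuousLinearMap.neg_apply]; ring

theorem wirtZ_mul (hf : DifferentiableAt ℝ f z) (hg : DifferentiableAt ℝ g z) :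
    wirtZ (fun w => f w * g w) z = f z * wirtZ g z + g z * wirtZ f z := by
  unfold wirtZ
  rw [fderiv_fun_mul hf hg]
  simp only [ContinuousLinearMap.add_apply, ContinuousLinearMap.smul_apply, smul_eq_mul]; ring

theorem wirtZbar_mul (hf : DifferentiableAt ℝ f z) (hg : DifferentiableAt ℝ g z) :
    wirtZbar (fun w => f w * g w) z = f z * wirtZbar g z + g z * wirtZbar f z := by
  unfold wirtZbar
  rw [fderiv_fun_mul hf hg]
  simp only [ContinuousLinearMap.add_apply, ContinuousLinearMap.smul_apply, smul_eq_mul]; ring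

theorem wirtZ_const : wirtZ (fun _ => c) z = 0 := by
  unfold wirtZ; rw [fderiv_fun_const]; simp

theorem wirtZbar_const : wirtZbar (fun _ => c) z = 0 := by
  unfold wirtZbar; rw [fderiv_fun_const]; simp

theorem wirtZ_id : wirtZ (fun w => w) z = 1 := by
  unfold wirtZ
  rw [fderiv_id']
  simp [Complex.I_mul_I]
  norm_num

theorem wirtZbar_id : wirtZbar (fun w => w) z = 0 := by
  unfold wirtZbar
  rw [fderiv_id']
  simp [Complex.I_mul_I]

theorem hasFDerivAt_conj (z : ℂ) :
    HasFDerivAt (fun w : ℂ => (starRingEnd ℂ) w) (Complex.conjCLE : ℂ →L[ℝ] ℂ) z :=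
  Complex.conjCLE.hasFDerivAt

theorem wirtZ_conj : wirtZ (fun w => (starRingEnd ℂ) w) z = 0 := by
  unfold wirtZ
  rw [(hasFDerivAt_conj z).fderiv]
  simp [Complex.conj_I]

theorem wirtZbar_conj : wirtZbar (fun w => (starRingEnd ℂ) w) z = 1 := by
  unfold wirtZbar
  rw [(hasFDerivAt_conj z).fderiv]
  simp [Complex.conj_I]
  ring



section
variable {f g : ℂ → ℂ} {z c : ℂ} {s : Set ℂ}
variable {f g : ℂ → ℂ} {z c : ℂ} {s : Set ℂ}

theorem wirtZ_cmul (hg : DifferentiableAt ℝ g z) :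
    wirtZ (fun w => c * g w) z = c * wirtZ g z := by
  unfold wirtZ
  rw [fderiv_const_mul hg]
  simp only [ContinuousLinearMap.smul_apply, smul_eq_mul]; ring

theorem wirtZbar_cmul (hg : DifferentiableAt ℝ g z) :
    wirtZbar (fun w => c * g w) z = c * wirtZbar g z := by
  unfold wirtZbar
  rw [fderiv_const_mul hg]
  simp only [ContinuousLinearMap.smul_apply, smul_eq_mul]; ring

theorem contDiffOn_wirtZ (hs : IsOpen s) (hf : ContDiffOn ℝ (⊤ : ℕ∞) f s) :
    ContDiffOn ℝ (⊤ : ℕ∞) (wirtZ f) s := by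
  have h1 : ContDiffOn ℝ (⊤ : ℕ∞) (fderiv ℝ f) s := hf.fderiv_of_isOpen hs (by simp)
  unfold wirtZ
  exact contDiffOn_const.mul ((h1.clm_apply contDiffOn_const).sub
    (contDiffOn_const.mul (h1.clm_apply contDiffOn_const)))

theorem contDiffOn_wirtZbar (hs : IsOpen s) (hf : ContDiffOn ℝ (⊤ : ℕ∞) f s) :
    ContDiffOn ℝ (⊤ : ℕ∞) (wirtZbar f) s := by
  have h1 : ContDiffOn ℝ (⊤ : ℕ∞) (fderiv ℝ f) s := hf.fderiv_of_isOpen hs (by simp)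
  unfold wirtZbar
  exact contDiffOn_const.mul ((h1.clm_apply contDiffOn_const).add
    (contDiffOn_const.mul (h1.clm_apply contDiffOn_const)))

theorem fderiv_fderiv_apply (h2 : ContDiffAt ℝ 2 f z) (v w : ℂ) :
    fderiv ℝ (fun y => fderiv ℝ f y v) z w = fderiv ℝ (fderiv ℝ f) z w v := by
  have hd : DifferentiableAt ℝ (fderiv ℝ f) z :=
    (h2.fderiv_right (m := 1) (by norm_num)).differentiableAt one_ne_zero
  rw [fderiv_clm_apply hd (differentiableAt_const v)]
  simp

theorem wirt_comm (hs : IsOpen s) (hf : ContDiffOn ℝ (⊤ : ℕ∞) f s) (hz : z ∈ s) :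
    wirtZbar (wirtZ f) z = wirtZ (wirtZbar f) z := by
  have hfa : ContDiffAt ℝ (⊤ : ℕ∞) f z := hf.contDiffAt (hs.mem_nhds hz)
  have hsym : IsSymmSndFDerivAt ℝ f z := hfa.isSymmSndFDerivAt (by rw [minSmoothness_of_isRCLikeNormedField]; exact WithTop.coe_le_coe.mpr le_top)
  have h2 : ContDiffAt ℝ 2 f z := hfa.of_le (WithTop.coe_le_coe.mpr le_top)
  have hd : DifferentiableAt ℝ (fderiv ℝ f) z :=
    (h2.fderiv_right (m := 1) (by norm_num)).differentiableAt one_ne_zero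
  have h1 : DifferentiableAt ℝ (fun y => fderiv ℝ f y (1 : ℂ)) z :=
    hd.clm_apply (differentiableAt_const _)
  have hI : DifferentiableAt ℝ (fun y => fderiv ℝ f y Complex.I) z :=
    hd.clm_apply (differentiableAt_const _)
  have eZ : wirtZ f = fun y => (1/2 : ℂ) * (fderiv ℝ f y 1 - Complex.I * fderiv ℝ f y Complex.I) := rfl
  have eZb : wirtZbar f = fun y => (1/2 : ℂ) * (fderiv ℝ f y 1 + Complex.I * fderiv ℝ f y Complex.I) := rfl
  rw [eZ, eZb]
  rw [show (fun y => (1/2 : ℂ) * (fderiv ℝ f y 1 - Complex.I * fderiv ℝ f y Complex.I))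
      = (fun y => (1/2 : ℂ) * (fderiv ℝ f y 1 - Complex.I * fderiv ℝ f y Complex.I)) from rfl]
  rw [wirtZbar_cmul (h1.fun_sub (hI.const_mul Complex.I)),
      wirtZ_cmul (h1.fun_add (hI.const_mul Complex.I)),
      wirtZbar_sub h1 (hI.const_mul Complex.I),
      wirtZ_add h1 (hI.const_mul Complex.I),
      wirtZbar_cmul hI, wirtZ_cmul hI]
  unfold wirtZ wirtZbar
  rw [fderiv_fderiv_apply h2 1 1, fderiv_fderiv_apply h2 1 Complex.I,
      fderiv_fderiv_apply h2 Complex.I 1, fderiv_fderiv_apply h2 Complex.I Complex.I]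
  have h := hsym.eq 1 Complex.I
  rw [h]; ring
end

section extra
variable {f g : ℂ → ℂ} {z c : ℂ} {s : Set ℂ}

@[fun_prop]
theorem diffAt_conj (z : ℂ) : DifferentiableAt ℝ (fun w : ℂ => (starRingEnd ℂ) w) z :=
  (Complex.conjCLE : ℂ ≃L[ℝ] ℂ).differentiableAt

@[fun_prop]
theorem diff_u (z : ℂ) :
    DifferentiableAt ℝ (fun w : ℂ => (1 : ℂ) - w * (starRingEnd ℂ) w) z := by
  fun_prop

end extra

theorem magL_intertwining (ν : ℝ) (f : ℂ → ℂ)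
    (hf : ContDiffOn ℝ (⊤ : ℕ∞) f (Metric.ball (0 : ℂ) 1)) :
    ∀ z ∈ Metric.ball (0 : ℂ) 1,
      magL ν (nablaOp (ν - 1) f) z
        = nablaOp (ν - 1) (fun w => magL (ν - 1) f w + ((2 * ν - 1 : ℝ) : ℂ) * f w) z := by
  intro z hz
  have hD : IsOpen (Metric.ball (0 : ℂ) 1) := Metric.isOpen_ball
  have hcoe2 : ∀ w : ℂ, ((‖w‖ ^ 2 : ℝ) : ℂ) = w * (starRingEnd ℂ) w := by
    intro w
    rw [Complex.sq_norm, Complex.mul_conj]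
  have hcoe : ∀ w : ℂ, (((1 - ‖w‖ ^ 2 : ℝ)) : ℂ) = 1 - w * (starRingEnd ℂ) w := by
    intro w
    rw [Complex.ofReal_sub, Complex.ofReal_one, hcoe2]
  have hN : ∀ (μ : ℝ) (g : ℂ → ℂ), nablaOp μ g
      = fun w => ((1 : ℂ) - w * (starRingEnd ℂ) w) * (-(wirtZ g w))
          + (μ : ℂ) * ((starRingEnd ℂ) w * g w) := by
    intro μ g; funext w
    rw [nablaOp, hcoe]; ring
  have hL : ∀ (μ : ℝ) (g : ℂ → ℂ), magL μ g
      = fun w => ((1 : ℂ) - w * (starRingEnd ℂ) w) *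
            (((1 : ℂ) - w * (starRingEnd ℂ) w) * (-(wirtZ (wirtZbar g) w)))
          + (μ : ℂ) * (((1 : ℂ) - w * (starRingEnd ℂ) w) *
              ((starRingEnd ℂ) w * wirtZbar g w - w * wirtZ g w))
          + (μ : ℂ) ^ 2 * (w * ((starRingEnd ℂ) w * g w)) := by
    intro μ g; funext w
    rw [magL, hcoe, hcoe2]; ring
  have hf1 : ContDiffOn ℝ (⊤ : ℕ∞) (wirtZ f) (Metric.ball (0 : ℂ) 1) := contDiffOn_wirtZ hD hf
  have hf2 : ContDiffOn ℝ (⊤ : ℕ∞) (wirtZbar f) (Metric.ball (0 : ℂ) 1) := contDiffOn_wirtZbar hD hf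
  have hf4 : ContDiffOn ℝ (⊤ : ℕ∞) (wirtZ (wirtZbar f)) (Metric.ball (0 : ℂ) 1) :=
    contDiffOn_wirtZ hD hf2
  have dA : ∀ g : ℂ → ℂ, ContDiffOn ℝ (⊤ : ℕ∞) g (Metric.ball (0 : ℂ) 1) →
      ∀ w ∈ Metric.ball (0 : ℂ) 1, DifferentiableAt ℝ g w :=
    fun g hg w hw => (hg.contDiffAt (hD.mem_nhds hw)).differentiableAt (by simp)
  have hsymm : ∀ w ∈ Metric.ball (0 : ℂ) 1, wirtZbar (wirtZ f) w = wirtZ (wirtZbar f) w :=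
    fun w hw => wirt_comm hD hf hw
  -- expansion of ∂̄ of the nabla operator, valid on the whole ball
  have hB : ∀ w ∈ Metric.ball (0 : ℂ) 1, wirtZbar (nablaOp (ν - 1) f) w
      = w * wirtZ f w - ((1 : ℂ) - w * (starRingEnd ℂ) w) * wirtZ (wirtZbar f) w
        + ((ν : ℂ) - 1) * f w + ((ν : ℂ) - 1) * ((starRingEnd ℂ) w * wirtZbar f w) := by
    intro w hw
    have d1 : DifferentiableAt ℝ (wirtZ f) w := dA _ hf1 w hw
    have d2 : DifferentiableAt ℝ f w := dA _ hf w hw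
    rw [hN]
    simp (disch := fun_prop) only [wirtZbar_add, wirtZbar_sub, wirtZbar_mul, wirtZbar_neg,
      wirtZbar_const, wirtZbar_id, wirtZbar_conj]
    rw [hsymm w hw]
    push_cast
    ring
  -- expansion of ∂ of the nabla operator at z
  have hA : wirtZ (nablaOp (ν - 1) f) z
      = -((1 : ℂ) - z * (starRingEnd ℂ) z) * wirtZ (wirtZ f) z
        + (starRingEnd ℂ) z * wirtZ f z + ((ν : ℂ) - 1) * ((starRingEnd ℂ) z * wirtZ f z) := by
    have d1 : DifferentiableAt ℝ (wirtZ f) z := dA _ hf1 z hz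
    have d2 : DifferentiableAt ℝ f z := dA _ hf z hz
    rw [hN]
    simp (disch := fun_prop) only [wirtZ_add, wirtZ_sub, wirtZ_mul, wirtZ_neg,
      wirtZ_const, wirtZ_id, wirtZ_conj]
    push_cast
    ring
  -- second order expansion : ∂ ∂̄ of the nabla operator at z
  have hG : wirtZbar (nablaOp (ν - 1) f) =ᶠ[nhds z]
      (fun w => w * wirtZ f w - ((1 : ℂ) - w * (starRingEnd ℂ) w) * wirtZ (wirtZbar f) w
        + ((ν : ℂ) - 1) * f w + ((ν : ℂ) - 1) * ((starRingEnd ℂ) w * wirtZbar f w)) :=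
    Filter.eventuallyEq_of_mem (hD.mem_nhds hz) hB
  have hT2 : wirtZ (wirtZbar (nablaOp (ν - 1) f)) z
      = wirtZ f z + z * wirtZ (wirtZ f) z
        + (starRingEnd ℂ) z * wirtZ (wirtZbar f) z
        - ((1 : ℂ) - z * (starRingEnd ℂ) z) * wirtZ (wirtZ (wirtZbar f)) z
        + ((ν : ℂ) - 1) * wirtZ f z
        + ((ν : ℂ) - 1) * ((starRingEnd ℂ) z * wirtZ (wirtZbar f) z) := by
    have d1 : DifferentiableAt ℝ (wirtZ f) z := dA _ hf1 z hz
    have d2 : DifferentiableAt ℝ f z := dA _ hf z hz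
    have d3 : DifferentiableAt ℝ (wirtZbar f) z := dA _ hf2 z hz
    have d4 : DifferentiableAt ℝ (wirtZ (wirtZbar f)) z := dA _ hf4 z hz
    rw [wirtZ_congr hG]
    simp (disch := fun_prop) only [wirtZ_add, wirtZ_sub, wirtZ_mul, wirtZ_neg,
      wirtZ_const, wirtZ_id, wirtZ_conj]
    ring
  have d1 : DifferentiableAt ℝ (wirtZ f) z := dA _ hf1 z hz
  have d2 : DifferentiableAt ℝ f z := dA _ hf z hz
  have d3 : DifferentiableAt ℝ (wirtZbar f) z := dA _ hf2 z hz
  have d4 : DifferentiableAt ℝ (wirtZ (wirtZbar f)) z := dA _ hf4 z hz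
  rw [hL ν (nablaOp (ν - 1) f), hL (ν - 1) f]
  beta_reduce
  rw [hT2, hA, hB z hz, hN (ν - 1) f, hN (ν - 1)]
  beta_reduce
  simp (disch := fun_prop) only [wirtZ_add, wirtZ_sub, wirtZ_mul, wirtZ_neg,
    wirtZ_const, wirtZ_id, wirtZ_conj]
  push_cast
  ring
end rules
end
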